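/- arXiv:1708.09458 — 2 statements merged into one kernel-verified Lean document; each statement's English description precedes it below -/
import Mathlib

section
/- Let f₀'' ∈ L_1(ℝ) and fix an angle Φ with sin Φ ≠ 0. Define I(ρ) = 2ρ ∫_ℝ f₀''(ρ cos Φ − vρ sin Φ) · (ρ cos ω − vρ sin ω)²/(ρ² + (vρ)²) · (1/ρ) dv in the equivalent form I(ρ) = 2 ∫_ℝ f₀''(ρ cos Φ − x sin Φ) · (ρ cos ω − x sin ω)²/(ρ² + x²) dx for a fixed angle ω. If additionally ∫_ℝ f₀''(x) dx = 0 (e.g. f₀' vanishes at ±∞, which holds when f₀ ∈ W¹₂(ℝ) with f₀'' ∈ L¹), then lim_{ρ → 0⁺} I(ρ) = 0. -/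
/-!
Substituting `u = ρ cos Φ − x sin Φ` turns the integral into `|sin Φ|⁻¹ ∫ g(u) K_ρ(u) du`,
where the kernel `K_ρ(u) = (ρ cos ω − x sin ω)² / (ρ² + x²)` with `x = (ρ cos Φ − u) / sin Φ`
takes values in `[0, 1]` by Cauchy–Schwarz and tends to `sin² ω` at every `u ≠ 0` as `ρ → 0`.
Dominated convergence then gives the limit `|sin Φ|⁻¹ sin² ω ∫ g = 0`.
-/

open MeasureTheory Real Filter Topology

theorem integral_comp_sub_div (f : ℝ → ℝ) (a s : ℝ) :
    ∫ u, f ((a - u) / s) = |s| * ∫ x, f x := by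
  simp_rw [div_eq_inv_mul, mul_comm s⁻¹]
  rw [integral_sub_left_eq_self (fun v => f (v * s⁻¹)) volume a]
  simp_rw [mul_comm _ s⁻¹]
  rw [Measure.integral_comp_mul_left, inv_inv, smul_eq_mul]

theorem tendsto_integral_mul_of_bounded {ι α : Type*} [MeasurableSpace α] {μ : Measure α}
    {l : Filter ι} [l.IsCountablyGenerated] {g k : α → ℝ} {K : ι → α → ℝ} {C : ℝ}
    (hg : Integrable g μ) (hK_meas : ∀ᶠ i in l, AEStronglyMeasurable (K i) μ)
    (hK_bound : ∀ᶠ i in l, ∀ᵐ a ∂μ, ‖K i a‖ ≤ C)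
    (hK_lim : ∀ᵐ a ∂μ, Tendsto (fun i => K i a) l (𝓝 (k a))) :
    Tendsto (fun i => ∫ a, g a * K i a ∂μ) l (𝓝 (∫ a, g a * k a ∂μ)) := by
  refine tendsto_integral_filter_of_dominated_convergence (fun a => ‖g a‖ * C)
    (hK_meas.mono fun i hi => hg.aestronglyMeasurable.mul hi) ?_ (hg.norm.mul_const C) ?_
  · filter_upwards [hK_bound] with i hi
    filter_upwards [hi] with a ha
    rw [norm_mul]
    gcongr
  · filter_upwards [hK_lim] with a ha
    exact ha.const_mul (g a)

noncomputable def angularKernel (ω ρ x : ℝ) : ℝ :=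
  (ρ * cos ω - x * sin ω) ^ 2 / (ρ ^ 2 + x ^ 2)

theorem norm_angularKernel_le_one (ω ρ x : ℝ) : ‖angularKernel ω ρ x‖ ≤ 1 := by
  have cauchy_schwarz : (ρ * cos ω - x * sin ω) ^ 2 ≤ ρ ^ 2 + x ^ 2 := by
    nlinarith [sq_nonneg (ρ * sin ω + x * cos ω), sin_sq_add_cos_sq ω]
  rw [angularKernel, norm_of_nonneg (by positivity)]
  exact div_le_one_of_le₀ cauchy_schwarz (by positivity)

theorem angularKernel_zero_left (ω : ℝ) {x : ℝ} (hx : x ≠ 0) :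
    angularKernel ω 0 x = sin ω ^ 2 := by
  unfold angularKernel
  field_simp
  ring

theorem measurable_angularKernel (ω ρ : ℝ) : Measurable (angularKernel ω ρ) := by
  unfold angularKernel
  fun_prop

theorem tendsto_angularKernel_affine (ω c : ℝ) {s u : ℝ} (hs : s ≠ 0) (hu : u ≠ 0) :
    Tendsto (fun ρ => angularKernel ω ρ ((ρ * c - u) / s)) (𝓝 0) (𝓝 (sin ω ^ 2)) := by
  have hcont : ContinuousAt (fun ρ => angularKernel ω ρ ((ρ * c - u) / s)) 0 := by
    refine ContinuousAt.div (by fun_prop) (by fun_prop) ?_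
    simp [hs, hu]
  convert hcont.tendsto using 2
  rw [zero_mul, zero_sub, angularKernel_zero_left ω (by simpa [hs] using hu)]

/-- Vanishing of the second-derivative term: if `g ∈ L_1(ℝ)` with `∫ g = 0` and
`sin Φ ≠ 0`, then `I(ρ) = 2 ∫ g(ρ cos Φ − x sin Φ)(ρ cos ω − x sin ω)²/(ρ²+x²) dx → 0`
as `ρ → 0⁺`. -/
theorem second_derivative_term_vanishes (g : ℝ → ℝ) (hg : MeasureTheory.Integrable g)
    (hg0 : (∫ x : ℝ, g x) = 0) (Φ ω : ℝ) (hΦ : Real.sin Φ ≠ 0) :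
    Filter.Tendsto
      (fun ρ : ℝ => 2 * ∫ x : ℝ,
        g (ρ * Real.cos Φ - x * Real.sin Φ) *
          ((ρ * Real.cos ω - x * Real.sin ω) ^ 2 / (ρ ^ 2 + x ^ 2)))
      (𝓝[>] (0 : ℝ)) (𝓝 0) := by
  set s := sin Φ
  let K ρ u := angularKernel ω ρ ((ρ * cos Φ - u) / s)
  have substitution (ρ : ℝ) : ∫ x, g (ρ * cos Φ - x * s) * angularKernel ω ρ x
      = |s|⁻¹ * ∫ u, g u * K ρ u := by
    have := integral_comp_sub_div (fun x => g (ρ * cos Φ - x * s) * angularKernel ω ρ x)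
      (ρ * cos Φ) s
    simp only [div_mul_cancel₀ _ hΦ, sub_sub_cancel] at this
    rw [this, inv_mul_cancel_left₀ (abs_ne_zero.2 hΦ)]
  have dominated : Tendsto (fun ρ => ∫ u, g u * K ρ u) (𝓝 0) (𝓝 (∫ u, g u * sin ω ^ 2)) :=
    tendsto_integral_mul_of_bounded (C := 1) hg
      (.of_forall fun ρ => ((measurable_angularKernel ω ρ).comp (by fun_prop)).aestronglyMeasurable)
      (.of_forall fun ρ => .of_forall fun u => norm_angularKernel_le_one ..)
      (by
        filter_upwards [Measure.ae_ne volume 0] with u hu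
        exact tendsto_angularKernel_affine ω (cos Φ) hΦ hu)
  rw [integral_mul_const, hg0, zero_mul] at dominated
  change Tendsto (fun ρ => 2 * ∫ x, g (ρ * cos Φ - x * s) * angularKernel ω ρ x) _ _
  simp_rw [substitution]
  simpa using
    ((dominated.const_mul |s|⁻¹).const_mul 2).mono_left nhdsWithin_le_nhds
end

section
/- Suppose f₀ ∈ L_p(ℝ) for some p > 2 with conjugate exponent q < 2. Then the double integral ∫_{π/2}^{2π} ∫_0^1 ρ² · (∫_ℝ |f₀(w)| · |ρ sin Φ_θ| / ((w − ρ cos Φ_θ)² + (ρ sin Φ_θ)²) dw)² dρ dθ is finite, where Φ_θ = (2/3)(π + θ). -/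
/-!
The inner integral is `∫ |f₀| P` for the half-plane Poisson kernel
`P(w) = |b| / ((w - a)² + b²)` with `a = ρ cos Φ_θ`, `b = ρ sin Φ_θ`. Hölder's inequality bounds it
by `‖f₀‖_p ‖P‖_q`, and scaling gives `‖P‖_q = |b|^(1/q - 1) ‖P₀‖_q`, where `P₀(u) = 1 / (1 + u²)`
lies in `L_q` because `q > 1/2`. Hence the `ρ`-integrand is at most a constant times
`ρ^(2/q) |sin Φ_θ|^(2/q - 2) ≤ |sin Φ_θ|^(2/q - 2)`. Since `q < 2` the exponent exceeds `-1`, so by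
Jordan's inequality `|sin|^(2/q - 2)` is locally integrable.
-/

open MeasureTheory Real Set
open scoped ENNReal

lemma abs_sin_rpow_le {e x : ℝ} (he : e ≤ 0) (hx : x ∈ Ioo 0 π) :
    |sin x| ^ e ≤ (2 / π) ^ e * (x ^ e + (π - x) ^ e) := by
  obtain ⟨hx0, hxπ⟩ := hx
  have hmin : 0 < min x (π - x) := lt_min hx0 (by linarith)
  have jordan : 2 / π * min x (π - x) ≤ |sin x| := by
    rw [abs_of_pos (sin_pos_of_pos_of_lt_pi hx0 hxπ)]
    rcases le_total x (π / 2) with h | h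
    · exact (mul_le_mul_of_nonneg_left (min_le_left _ _) (by positivity)).trans
        (mul_le_sin hx0.le h)
    · rw [← sin_pi_sub]
      exact (mul_le_mul_of_nonneg_left (min_le_right _ _) (by positivity)).trans
        (mul_le_sin (by linarith) (by linarith))
  calc |sin x| ^ e ≤ (2 / π * min x (π - x)) ^ e :=
        rpow_le_rpow_of_nonpos (by positivity) jordan he
    _ = (2 / π) ^ e * min x (π - x) ^ e := mul_rpow (by positivity) hmin.le
    _ ≤ (2 / π) ^ e * (x ^ e + (π - x) ^ e) := by
        gcongr
        rcases min_choice x (π - x) with h | h <;> rw [h]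
        · exact le_add_of_nonneg_right (rpow_nonneg (by linarith) _)
        · exact le_add_of_nonneg_left (rpow_nonneg hx0.le _)

lemma intervalIntegrable_abs_sin_rpow {e : ℝ} (he : -1 < e) (a b : ℝ) :
    IntervalIntegrable (fun x ↦ |sin x| ^ e) volume a b := by
  have hperiodic : Function.Periodic (fun x ↦ |sin x| ^ e) π := fun x ↦ by
    simp only [sin_add_pi, abs_neg]
  refine hperiodic.intervalIntegrable₀ pi_ne_zero ?_ a b
  rcases le_or_gt 0 e with he0 | he0
  · exact ((continuous_rpow_const he0).comp continuous_sin.abs).intervalIntegrable 0 π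
  have hdom : IntervalIntegrable (fun x ↦ (2 / π) ^ e * (x ^ e + (π - x) ^ e)) volume 0 π := by
    refine .const_mul (.add (intervalIntegral.intervalIntegrable_rpow' he) ?_) _
    simpa using
      ((intervalIntegral.intervalIntegrable_rpow' he (a := 0) (b := π)).comp_sub_left π).symm
  refine hdom.mono_fun (continuous_sin.abs.measurable.pow_const e).aestronglyMeasurable ?_
  rw [uIoc_of_le pi_pos.le, ← restrict_Ioo_eq_restrict_Ioc]
  filter_upwards [ae_restrict_mem measurableSet_Ioo] with x hx
  have hbound := abs_sin_rpow_le he0.le hx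
  have hnonneg : 0 ≤ |sin x| ^ e := rpow_nonneg (abs_nonneg _) e
  rwa [norm_of_nonneg hnonneg, norm_of_nonneg (hnonneg.trans hbound)]

lemma intervalIntegrable_abs_sin_mul_add_rpow {e : ℝ} (he : -1 < e) (c d a b : ℝ) :
    IntervalIntegrable (fun x ↦ |sin (c * (d + x))| ^ e) volume a b := by
  rcases eq_or_ne c 0 with rfl | hc
  · simp
  simpa [hc] using
    ((intervalIntegrable_abs_sin_rpow he (c * (d + a)) (c * (d + b))).comp_mul_left
      (c := c)).comp_add_left d

/-- `π⁻¹` times the Poisson kernel of the half-plane containing `a + b i`, at `w ∈ ℝ`. -/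
noncomputable def halfPlanePoissonKernel (a b w : ℝ) : ℝ := |b| / ((w - a) ^ 2 + b ^ 2)

lemma halfPlanePoissonKernel_nonneg (a b w : ℝ) : 0 ≤ halfPlanePoissonKernel a b w := by
  unfold halfPlanePoissonKernel; positivity

lemma continuous_halfPlanePoissonKernel {b : ℝ} (hb : b ≠ 0) (a : ℝ) :
    Continuous (halfPlanePoissonKernel a b) :=
  continuous_const.div (by fun_prop) fun w ↦ by positivity

lemma halfPlanePoissonKernel_abs_mul_add {b : ℝ} (hb : b ≠ 0) (a u : ℝ) :
    halfPlanePoissonKernel a b (|b| * u + a) = |b|⁻¹ * halfPlanePoissonKernel 0 1 u := by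
  simp only [halfPlanePoissonKernel, add_sub_cancel_right, mul_pow, sq_abs, sub_zero, abs_one,
    one_pow]
  field_simp
  rw [sq_abs]

lemma lintegral_eq_ofReal_abs_mul_lintegral_comp_mul_add {f : ℝ → ℝ≥0∞} (hf : Measurable f)
    {c : ℝ} (hc : c ≠ 0) (d : ℝ) :
    ∫⁻ y, f y = ENNReal.ofReal |c| * ∫⁻ x, f (c * x + d) := by
  have hmap : ∫⁻ y, f (y + d) ∂(Measure.map (c * ·) volume) = ∫⁻ x, f (c * x + d) :=
    lintegral_map (hf.comp (measurable_add_const d)) (measurable_const_mul c)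
  rw [← hmap, Real.map_volume_mul_left hc, lintegral_smul_measure, lintegral_add_right_eq_self,
    smul_eq_mul, ← mul_assoc, ← ENNReal.ofReal_mul (abs_nonneg c), ← abs_mul, mul_inv_cancel₀ hc,
    abs_one, ENNReal.ofReal_one, one_mul]

lemma eLpNorm_halfPlanePoissonKernel {q : ℝ} (hq : 0 < q) {b : ℝ} (hb : b ≠ 0) (a : ℝ) :
    eLpNorm (halfPlanePoissonKernel a b) (ENNReal.ofReal q) =
      ENNReal.ofReal (|b| ^ (1 / q - 1)) *
        eLpNorm (halfPlanePoissonKernel 0 1) (ENNReal.ofReal q) := by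
  have hb' : 0 < |b| := abs_pos.2 hb
  have hmeas : Measurable fun w ↦ ENNReal.ofReal (halfPlanePoissonKernel a b w) ^ q :=
    (continuous_halfPlanePoissonKernel hb a).measurable.ennreal_ofReal.pow_const q
  have hscale : ∫⁻ w, ENNReal.ofReal (halfPlanePoissonKernel a b w) ^ q =
      ENNReal.ofReal (|b| ^ (1 - q)) *
        ∫⁻ u, ENNReal.ofReal (halfPlanePoissonKernel 0 1 u) ^ q := by
    rw [lintegral_eq_ofReal_abs_mul_lintegral_comp_mul_add hmeas hb'.ne' a]
    simp_rw [halfPlanePoissonKernel_abs_mul_add hb, ENNReal.ofReal_mul (inv_nonneg.2 hb'.le),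
      ENNReal.mul_rpow_of_nonneg _ _ hq.le,
      ENNReal.ofReal_rpow_of_nonneg (inv_nonneg.2 hb'.le) hq.le]
    rw [lintegral_const_mul' _ _ ENNReal.ofReal_ne_top, ← mul_assoc, abs_abs,
      ← ENNReal.ofReal_mul hb'.le, inv_rpow hb'.le, rpow_sub hb', rpow_one, div_eq_mul_inv]
  simp_rw [eLpNorm_eq_lintegral_rpow_enorm_toReal (ENNReal.ofReal_ne_zero_iff.2 hq)
      ENNReal.ofReal_ne_top,
    ENNReal.toReal_ofReal hq.le, enorm_eq_ofReal (halfPlanePoissonKernel_nonneg _ _ _), hscale,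
    ENNReal.mul_rpow_of_nonneg _ _ (one_div_nonneg.2 hq.le),
    ENNReal.ofReal_rpow_of_nonneg (rpow_nonneg hb'.le _) (one_div_nonneg.2 hq.le),
    ← rpow_mul hb'.le]
  congr 3
  field_simp

lemma memLp_halfPlanePoissonKernel {q : ℝ} (hq : 1 / 2 < q) :
    MemLp (halfPlanePoissonKernel 0 1) (ENNReal.ofReal q) := by
  have hq0 : 0 < q := by linarith
  have hint : Integrable fun u : ℝ ↦ (1 + ‖u‖ ^ 2) ^ (-(2 * q) / 2) :=
    integrable_rpow_neg_one_add_norm_sq (by simp; linarith)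
  rw [← integrable_norm_rpow_iff
    (continuous_halfPlanePoissonKernel one_ne_zero 0).aestronglyMeasurable
    (ENNReal.ofReal_ne_zero_iff.2 hq0) ENNReal.ofReal_ne_top, ENNReal.toReal_ofReal hq0.le]
  refine hint.congr (.of_forall fun u ↦ ?_)
  have hu : 0 < 1 + u ^ 2 := by positivity
  simp only [halfPlanePoissonKernel, norm_eq_abs, sq_abs, sub_zero, abs_one, one_pow]
  rw [abs_of_pos (by positivity), neg_div, mul_div_cancel_left₀ _ two_ne_zero, rpow_neg hu.le,
    one_div, inv_rpow (by positivity), add_comm]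

lemma ofReal_integral_mul_le_eLpNorm_mul_eLpNorm {p q : ℝ} (hpq : p.HolderConjugate q)
    {f g : ℝ → ℝ} (hf : AEStronglyMeasurable f) (hg : AEStronglyMeasurable g) :
    ENNReal.ofReal (∫ w, f w * g w) ≤
      eLpNorm f (ENNReal.ofReal p) * eLpNorm g (ENNReal.ofReal q) := by
  have := hpq.ennrealOfReal
  have holder : eLpNorm (fun w ↦ f w * g w) 1 ≤
      eLpNorm f (ENNReal.ofReal p) * eLpNorm g (ENNReal.ofReal q) := by
    simpa using eLpNorm_le_eLpNorm_mul_eLpNorm'_of_norm hf hg (· * ·) 1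
      (.of_forall fun w ↦ by simp [norm_mul])
  refine le_trans ?_ holder
  rw [eLpNorm_one_eq_lintegral_enorm]
  exact (ofReal_le_enorm _).trans (enorm_integral_le_lintegral_enorm _)

lemma ofReal_sq_mul_sq_integral_le {p q : ℝ} (hpq : p.HolderConjugate q) {f : ℝ → ℝ}
    (hf : AEStronglyMeasurable f) {ρ : ℝ} (hρ : ρ ∈ Ioc 0 1) (c s : ℝ) :
    ENNReal.ofReal (ρ ^ 2 * (∫ w, |f w| * |ρ * s| / ((w - ρ * c) ^ 2 + (ρ * s) ^ 2)) ^ 2) ≤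
      (eLpNorm f (ENNReal.ofReal p) *
        eLpNorm (halfPlanePoissonKernel 0 1) (ENNReal.ofReal q)) ^ 2 *
        ENNReal.ofReal (|s| ^ (2 / q - 2)) := by
  obtain ⟨hρ0, hρ1⟩ := hρ
  rcases eq_or_ne s 0 with rfl | hs
  · simp
  have hq := hpq.symm.pos
  have hb : ρ * s ≠ 0 := mul_ne_zero hρ0.ne' hs
  set A := eLpNorm f (ENNReal.ofReal p) * eLpNorm (halfPlanePoissonKernel 0 1) (ENNReal.ofReal q)
  set I := ∫ w, |f w| * |ρ * s| / ((w - ρ * c) ^ 2 + (ρ * s) ^ 2)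
  have hI : I = ∫ w, |f w| * halfPlanePoissonKernel (ρ * c) (ρ * s) w := by
    simp only [I, halfPlanePoissonKernel, mul_div_assoc]
  have hI_nonneg : 0 ≤ I :=
    hI ▸ integral_nonneg fun w ↦ mul_nonneg (abs_nonneg _) (halfPlanePoissonKernel_nonneg _ _ _)
  have holder : ENNReal.ofReal I ≤ A * ENNReal.ofReal (|ρ * s| ^ (1 / q - 1)) := by
    have := ofReal_integral_mul_le_eLpNorm_mul_eLpNorm hpq hf.norm
      (continuous_halfPlanePoissonKernel hb (ρ * c)).aestronglyMeasurable
    rw [eLpNorm_norm, eLpNorm_halfPlanePoissonKernel hq hb] at this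
    simp only [norm_eq_abs] at this
    rw [hI]
    exact this.trans_eq (by ring)
  have hρs : ρ ^ 2 * (|ρ * s| ^ (1 / q - 1)) ^ 2 ≤ |s| ^ (2 / q - 2) := by
    have hexp : (1 / q - 1) * (2 : ℕ) = 2 / q - 2 := by push_cast; ring
    have hρpow : ρ ^ 2 * ρ ^ (2 / q - 2) = ρ ^ (2 / q) := by
      rw [← rpow_two, ← rpow_add hρ0, add_sub_cancel]
    rw [← rpow_mul_natCast (abs_nonneg _), hexp, abs_mul, abs_of_pos hρ0,
      mul_rpow hρ0.le (abs_nonneg s), ← mul_assoc, hρpow]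
    exact mul_le_of_le_one_left (rpow_nonneg (abs_nonneg s) _)
      (rpow_le_one hρ0.le hρ1 (by positivity))
  calc ENNReal.ofReal (ρ ^ 2 * I ^ 2) = ENNReal.ofReal (ρ ^ 2) * ENNReal.ofReal I ^ 2 := by
        rw [ENNReal.ofReal_mul (sq_nonneg ρ), ENNReal.ofReal_pow hI_nonneg]
    _ ≤ ENNReal.ofReal (ρ ^ 2) * (A * ENNReal.ofReal (|ρ * s| ^ (1 / q - 1))) ^ 2 := by
        gcongr
    _ = A ^ 2 * ENNReal.ofReal (ρ ^ 2 * (|ρ * s| ^ (1 / q - 1)) ^ 2) := by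
        rw [ENNReal.ofReal_mul (sq_nonneg ρ), ENNReal.ofReal_pow (rpow_nonneg (abs_nonneg _) _)]
        ring
    _ ≤ A ^ 2 * ENNReal.ofReal (|s| ^ (2 / q - 2)) := by
        gcongr

/-- `L₂`-estimate in polar coordinates: if `f₀ ∈ L_p(ℝ)` with `p > 2` and conjugate
exponent `q = p/(p-1) < 2`, then
`∫_{π/2}^{2π} ∫_0^1 ρ² (∫ |f₀(w)| |ρ sin Φ_θ| / ((w − ρ cos Φ_θ)² + (ρ sin Φ_θ)²) dw)² dρ dθ`
is finite, where `Φ_θ = (2/3)(π + θ)`. -/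
theorem l2_polar_estimate (p : ℝ) (hp : 2 < p) (f₀ : ℝ → ℝ)
    (hf₀ : MeasureTheory.MemLp f₀ (ENNReal.ofReal p)) :
    (∫⁻ θ in Set.Ioc (Real.pi / 2) (2 * Real.pi),
      ∫⁻ ρ in Set.Ioc (0 : ℝ) 1,
        ENNReal.ofReal (ρ ^ 2 *
          (∫ w : ℝ, |f₀ w| * |ρ * Real.sin ((2 / 3) * (Real.pi + θ))| /
            ((w - ρ * Real.cos ((2 / 3) * (Real.pi + θ))) ^ 2 +
              (ρ * Real.sin ((2 / 3) * (Real.pi + θ))) ^ 2)) ^ 2)) < ⊤ := by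
  have hpq : p.HolderConjugate (p / (p - 1)) := .conjExponent (by linarith)
  set q := p / (p - 1)
  have hq : 1 / 2 < q := by rw [lt_div_iff₀ (by linarith)]; linarith
  have he : -1 < 2 / q - 2 := by
    have : q < 2 := by rw [div_lt_iff₀ (by linarith)]; linarith
    rw [lt_sub_iff_add_lt, lt_div_iff₀ (by linarith)]; linarith
  set K := (eLpNorm f₀ (ENNReal.ofReal p) *
    eLpNorm (halfPlanePoissonKernel 0 1) (ENNReal.ofReal q)) ^ 2
  have hK : K ≠ ∞ := by
    have := (memLp_halfPlanePoissonKernel hq).eLpNorm_lt_top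
    have := hf₀.eLpNorm_lt_top
    finiteness
  have hsin :
      IntegrableOn (fun θ ↦ |sin (2 / 3 * (π + θ))| ^ (2 / q - 2)) (Ioc (π / 2) (2 * π)) :=
    (intervalIntegrable_iff_integrableOn_Ioc_of_le (by linarith [pi_pos])).1
      (intervalIntegrable_abs_sin_mul_add_rpow he _ _ _ _)
  calc _ ≤ ∫⁻ θ in Ioc (π / 2) (2 * π), ∫⁻ _ in Ioc (0 : ℝ) 1,
          K * ENNReal.ofReal (|sin (2 / 3 * (π + θ))| ^ (2 / q - 2)) :=
        lintegral_mono fun θ ↦ setLIntegral_mono' measurableSet_Ioc fun ρ hρ ↦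
          ofReal_sq_mul_sq_integral_le hpq hf₀.1 hρ _ _
    _ = K * ∫⁻ θ in Ioc (π / 2) (2 * π),
          ENNReal.ofReal (|sin (2 / 3 * (π + θ))| ^ (2 / q - 2)) := by
        simp [lintegral_const_mul' _ _ hK]
    _ < ∞ := ENNReal.mul_lt_top hK.lt_top hsin.setLIntegral_lt_top
end
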